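/- Let X be a compact metric space and let S ⊆ C(ℝ,X) be a nonempty shift-invariant set satisfying the compactness axiom. Then there exists an invariant measure for S on X; that is, there exist a Borel probability measure ν on C(ℝ,X) with ν(S) = 1 which is invariant under the shift σ(t,·) for every t ∈ ℝ, and a Borel probability measure μ on X with μ = π_*ν (the pushforward of ν under evaluation at 0). -/

import Mathlib

/-!
`S` is compact, being the image of the fibre of `e_S` over `{0} × X`. Fix `φ₀ ∈ S` and average
the Dirac masses along its orbit over the time interval `(0, T]`: these probability measures are
carried by `S`, hence have a weak cluster point `ν` as `T → ∞` (Prokhorov). Shifting by `t`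
changes the time average of a bounded continuous `f` by at most `2|t|‖f‖/T`, so `ν` is
shift-invariant (Krylov–Bogolyubov).
-/

open Set Filter Topology MeasureTheory

namespace AxODE

variable {X : Type*} [MetricSpace X]

/-- The shift map `σ(t, φ)(s) = φ(s + t)` on `C(ℝ, X)`. -/
def shift (t : ℝ) (φ : C(ℝ, X)) : C(ℝ, X) :=
  ⟨fun s => φ (s + t), φ.continuous.comp (continuous_add_right t)⟩

/-- `S` is shift-invariant if `σ(t, φ) ∈ S` for all `t ∈ ℝ` and `φ ∈ S`. -/
def ShiftInvariant (S : Set C(ℝ, X)) : Prop :=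
  ∀ (t : ℝ), ∀ φ ∈ S, shift t φ ∈ S

/-- The evaluation map `e_S : ℝ × S → ℝ × X`, `e_S(t, φ) = (t, φ(t))`. -/
def evalMap (S : Set C(ℝ, X)) : ℝ × S → ℝ × X :=
  fun p => (p.1, (p.2 : C(ℝ, X)) p.1)

/-- `S` satisfies the compactness axiom if `e_S` is proper, i.e. the preimage under `e_S`
of every compact subset of `ℝ × X` is compact. -/
def CompactnessAxiom (S : Set C(ℝ, X)) : Prop :=
  ∀ K : Set (ℝ × X), IsCompact K → IsCompact (evalMap S ⁻¹' K)

open ProbabilityTheory BoundedContinuousFunction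
open scoped Interval

section TranslationAverage

variable {g : ℝ → ℝ} {C : ℝ}

theorem norm_integral_comp_add_left_sub_integral_le (hg : Continuous g) (hC : ∀ s, ‖g s‖ ≤ C)
    (t T : ℝ) : ‖(∫ s in 0..T, g (t + s)) - ∫ s in 0..T, g s‖ ≤ 2 * C * |t| := by
  rw [intervalIntegral.integral_comp_add_left, add_zero,
    intervalIntegral.integral_interval_sub_interval_comm (hg.intervalIntegrable _ _)
      (hg.intervalIntegrable _ _) (hg.intervalIntegrable _ _)]
  calc _ ≤ ‖∫ s in t..0, g s‖ + ‖∫ s in (t + T)..T, g s‖ := norm_sub_le _ _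
    _ ≤ C * |0 - t| + C * |T - (t + T)| :=
      add_le_add (intervalIntegral.norm_integral_le_of_norm_le_const fun s _ => hC s)
        (intervalIntegral.norm_integral_le_of_norm_le_const fun s _ => hC s)
    _ = 2 * C * |t| := by
      rw [zero_sub, abs_neg, sub_add_cancel_right, abs_neg]
      ring

theorem tendsto_intervalAverage_comp_add_left_sub (hg : Continuous g) (hC : ∀ s, ‖g s‖ ≤ C)
    (t : ℝ) :
    Tendsto (fun T => (⨍ s in 0..T, g (t + s)) - ⨍ s in 0..T, g s) atTop (𝓝 0) := by
  refine squeeze_zero_norm' ?_ (by simpa using tendsto_inv_atTop_zero.mul_const (2 * C * |t|))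
  filter_upwards [eventually_gt_atTop 0] with T hT
  rw [interval_average_eq, interval_average_eq, sub_zero, ← smul_sub, norm_smul,
    Real.norm_of_nonneg (inv_nonneg.2 hT.le)]
  exact mul_le_mul_of_nonneg_left (norm_integral_comp_add_left_sub_integral_le hg hC t T)
    (inv_nonneg.2 hT.le)

end TranslationAverage

section KrylovBogolyubov

theorem map_eq_self_of_mapClusterPt {E ι : Type*} [TopologicalSpace E] [MeasurableSpace E]
    [BorelSpace E] [HasOuterApproxClosed E] {g : E → E} (hg : Continuous g) {l : Filter ι}
    {μ : ι → ProbabilityMeasure E} {ν : ProbabilityMeasure E} (hν : MapClusterPt ν l μ)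
    (hμ : ∀ f : E →ᵇ ℝ, Tendsto (fun i => ∫ y, f (g y) ∂μ i - ∫ y, f y ∂μ i) l (𝓝 0)) :
    (ν : Measure E).map g = ν := by
  refine ext_of_forall_integral_eq_of_IsFiniteMeasure fun f => ?_
  rw [integral_map hg.aemeasurable f.continuous.aestronglyMeasurable]
  let Φ : ProbabilityMeasure E → ℝ := fun P => ∫ y, f (g y) ∂P - ∫ y, f y ∂P
  have hΦ : Continuous Φ := (ProbabilityMeasure.continuous_integral_boundedContinuousFunction
    (f.compContinuous ⟨g, hg⟩)).sub
      (ProbabilityMeasure.continuous_integral_boundedContinuousFunction f)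
  -- `Φ ν` is a cluster point of `Φ ∘ μ`, which tends to `0`.
  exact sub_eq_zero.1 (eq_of_nhds_neBot
    ((hν.continuousAt_comp hΦ.continuousAt).clusterPt.mono (hμ f)))

variable {E : Type*} [TopologicalSpace E] (ϕ : Flow ℝ E) (x : E)

theorem continuous_flow_orbit : Continuous fun t => ϕ t x :=
  ϕ.continuous continuous_id continuous_const

variable [MeasurableSpace E] [BorelSpace E] {T : ℝ}

noncomputable def orbitAverage (T : ℝ) : Measure E :=
  (volume[|Ι 0 T]).map (fun t => ϕ t x)

theorem isProbabilityMeasure_orbitAverage (hT : 0 < T) :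
    IsProbabilityMeasure (orbitAverage ϕ x T) := by
  have : IsProbabilityMeasure (volume[|Ι 0 T]) := by
    apply cond_isProbabilityMeasure_of_finite <;> simp [uIoc_of_le hT.le, hT]
  exact Measure.isProbabilityMeasure_map (continuous_flow_orbit ϕ x).measurable.aemeasurable

theorem integral_orbitAverage {f : E → ℝ} (hf : Continuous f) :
    ∫ y, f y ∂orbitAverage ϕ x T = ⨍ t in 0..T, f (ϕ t x) := by
  rw [orbitAverage, integral_map (continuous_flow_orbit ϕ x).measurable.aemeasurable
    hf.aestronglyMeasurable, setAverage_eq']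
  rfl

theorem orbitAverage_compl_eq_zero {K : Set E} (hK : MeasurableSet K)
    (hx : ∀ t, 0 ≤ t → ϕ t x ∈ K) (hT : 0 ≤ T) : orbitAverage ϕ x T Kᶜ = 0 := by
  rw [orbitAverage, Measure.map_apply (continuous_flow_orbit ϕ x).measurable hK.compl,
    cond_apply measurableSet_uIoc]
  convert mul_zero _
  rw [uIoc_of_le hT, ← measure_empty (μ := (volume : Measure ℝ))]
  congr 1
  ext t
  simpa using fun ht _ => hx t ht.le

theorem tendsto_integral_orbitAverage_comp_sub (f : E →ᵇ ℝ) (t : ℝ) :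
    Tendsto (fun T => ∫ y, f (ϕ t y) ∂orbitAverage ϕ x T - ∫ y, f y ∂orbitAverage ϕ x T)
      atTop (𝓝 0) := by
  simp_rw [integral_orbitAverage ϕ x (f := fun y => f (ϕ t y)) (by fun_prop),
    integral_orbitAverage ϕ x f.continuous, ← ϕ.map_add]
  exact tendsto_intervalAverage_comp_add_left_sub
    (f.continuous.comp (continuous_flow_orbit ϕ x)) (fun s => f.norm_coe_le_norm _) t

/-- Krylov–Bogolyubov: a weak cluster point of the averages along a forward orbit is invariant. -/
theorem exists_invariant_probabilityMeasure_of_isCompact [T2Space E] [HasOuterApproxClosed E]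
    {K : Set E} (hK : IsCompact K) (hx : ∀ t, 0 ≤ t → ϕ t x ∈ K) :
    ∃ ν : Measure E, IsProbabilityMeasure ν ∧ ν Kᶜ = 0 ∧ ∀ t, ν.map (ϕ t) = ν := by
  let μ : ℕ → ProbabilityMeasure E := fun n =>
    ⟨orbitAverage ϕ x (n + 1), isProbabilityMeasure_orbitAverage ϕ x (by positivity)⟩
  -- Prokhorov's lemma is stated for sequences `Kₙ`, `uₙ`; take them constant, equal to `K` and `0`.
  have hμK : ∀ n, μ n ∈ {P : ProbabilityMeasure E | ∀ _ : ℕ, P Kᶜ ≤ 0} := fun n _ => by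
    have hn : (0 : ℝ) ≤ n + 1 := by positivity
    simp [μ, orbitAverage_compl_eq_zero ϕ x hK.isClosed.measurableSet hx hn]
  obtain ⟨ν, hνK, hν⟩ := (isCompact_setOfPred_probabilityMeasure_mass_eq_compl_isCompact_le
    tendsto_const_nhds (fun _ => hK) (Or.inr monotone_const)).exists_mapClusterPt (f := atTop)
      (tendsto_principal.2 (Eventually.of_forall hμK))
  refine ⟨ν, inferInstance, ?_, fun t => map_eq_self_of_mapClusterPt (ϕ.continuous_toFun t) hν
    fun f => (tendsto_integral_orbitAverage_comp_sub ϕ x f t).comp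
      (tendsto_natCast_atTop_atTop.atTop_add tendsto_const_nhds)⟩
  rw [← ProbabilityMeasure.ennreal_coeFn_eq_coeFn_toMeasure, nonpos_iff_eq_zero.1 (hνK 0),
    ENNReal.coe_zero]

end KrylovBogolyubov

def shiftFlow : Flow ℝ C(ℝ, X) where
  toFun := shift
  cont' := by
    have : Continuous fun t : ℝ => (⟨(· + t), continuous_add_const t⟩ : C(ℝ, ℝ)) :=
      (ContinuousMap.curry ⟨fun p : ℝ × ℝ => p.2 + p.1, by fun_prop⟩).continuous
    exact ContinuousMap.continuous_comp'.comp (this.prodMap continuous_id)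
  map_add' t₁ t₂ φ := ContinuousMap.ext fun s => congrArg φ (by ring)
  map_zero' φ := ContinuousMap.ext fun s => congrArg φ (add_zero s)

theorem CompactnessAxiom.isCompact [CompactSpace X] {S : Set C(ℝ, X)}
    (h : CompactnessAxiom S) : IsCompact S := by
  convert (h _ (isCompact_singleton.prod isCompact_univ)).image
    (continuous_subtype_val.comp continuous_snd)
  ext ψ
  constructor
  · intro hψ
    exact ⟨((0 : ℝ), ⟨ψ, hψ⟩), ⟨rfl, mem_univ _⟩, rfl⟩
  · rintro ⟨⟨t, ψ', hψ'⟩, -, rfl⟩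
    exact hψ'

theorem exists_invariant_measure [CompactSpace X]
    [MeasurableSpace X] [BorelSpace X]
    [MeasurableSpace C(ℝ, X)] [BorelSpace C(ℝ, X)]
    (S : Set C(ℝ, X)) (hne : S.Nonempty) (hS : ShiftInvariant S)
    (hcpt : CompactnessAxiom S) :
    ∃ ν : Measure C(ℝ, X), IsProbabilityMeasure ν ∧ ν S = 1 ∧
      (∀ t : ℝ, Measure.map (shift t) ν = ν) ∧
      ∃ μ : Measure X, IsProbabilityMeasure μ ∧
        μ = Measure.map (fun φ : C(ℝ, X) => φ 0) ν := by
  obtain ⟨φ₀, hφ₀⟩ := hne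
  have hScpt := hcpt.isCompact
  obtain ⟨ν, hν, hνS, hinv⟩ :=
    exists_invariant_probabilityMeasure_of_isCompact shiftFlow φ₀ hScpt fun t _ => hS t φ₀ hφ₀
  exact ⟨ν, hν, (prob_compl_eq_zero_iff hScpt.isClosed.measurableSet).1 hνS, hinv, _,
    Measure.isProbabilityMeasure_map (continuous_eval_const 0).aemeasurable, rfl⟩

end AxODE
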